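/- Let d be an odd prime. Each Wootters–Fields basis {|ĵ_k⟩}_j is unbiased with respect to the standard basis: |⟨m|ĵ_k⟩|² = 1/d for all m, j, k ∈ {0,...,d−1}. Consequently, the standard basis together with the d Wootters–Fields bases forms a complete set of d+1 mutually unbiased bases of ℂ^d. -/

import Mathlib

/-!
Write `ψ` for the standard additive character of `ZMod d`, so that the entries of `|ĵ_k⟩` are
`ψ(jm + km²)/√d`. They all have modulus `1/√d`, which is unbiasedness against the standard
basis, and `⟨ĵ_k|ĵ'_k'⟩ = (1/d) ∑_x ψ((j'-j)x + (k'-k)x²)`. For `k = k'` this is a linear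
character sum, hence `δ_{jj'}`. For `k ≠ k'` it is a quadratic Gauss-type sum `S`, and
`|S|² = ∑_{x,y} ψ(q x - q y)`; substituting `x = y + h` gives `q x - q y = q h + 2(k'-k)hy`, so
summing over `y` first kills every `h ≠ 0` once `2` is invertible, leaving `|S|² = d`.
-/

/-- The Wootters–Fields basis vector `|ĵ_k⟩ = (1/√d) ∑_m ω^(jm+km²) |m⟩` in `ℂ^d`. -/
noncomputable def wfVec (d : ℕ) (k j : Fin d) : EuclideanSpace ℂ (Fin d) :=
  WithLp.toLp 2 (fun m : Fin d => ((1 / Real.sqrt d : ℝ) : ℂ) *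
    Complex.exp (2 * Real.pi * Complex.I *
      (((j.val * m.val + k.val * m.val ^ 2 : ℕ) : ℂ)) / d))

/-- The standard basis vector `|m⟩` of `ℂ^d`. -/
noncomputable def stdVec (d : ℕ) (m : Fin d) : EuclideanSpace ℂ (Fin d) :=
  EuclideanSpace.single m (1 : ℂ)

open Finset ComplexConjugate

theorem AddChar.norm_sq_sum_quadratic {F : Type*} [Field F] [Fintype F]
    {ψ : AddChar F ℂ} (hψ : ψ.IsPrimitive) (h2 : (2 : F) ≠ 0) {a : F} (ha : a ≠ 0) (b : F) :
    ‖∑ x, ψ (b * x + a * x ^ 2)‖ ^ 2 = Fintype.card F := by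
  classical
  set q : F → F := fun x => b * x + a * x ^ 2
  have hshift : ∀ y h, q (h + y) - q y = q h + y * (2 * a * h) := fun y h => by
    simp only [q]; ring
  have hdiag : ∀ h, 2 * a * h = 0 ↔ h = 0 := by simp [h2, ha]
  have : (‖∑ x, ψ (q x)‖ : ℂ) ^ 2 = Fintype.card F := calc
    _ = (∑ x, ψ (q x)) * conj (∑ y, ψ (q y)) := (Complex.mul_conj' _).symm
    _ = ∑ y, ∑ x, ψ (q x - q y) := by
        simp_rw [map_sum, ← AddChar.map_neg_eq_conj, sum_mul_sum, ← AddChar.map_add_eq_mul,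
          ← sub_eq_add_neg]
        rw [sum_comm]
    _ = ∑ y, ∑ h, ψ (q h) * ψ (y * (2 * a * h)) := by
        refine sum_congr rfl fun y _ => ?_
        rw [← Equiv.sum_comp (Equiv.addRight y)]
        simp_rw [Equiv.coe_addRight, hshift, AddChar.map_add_eq_mul]
    _ = ∑ h, ψ (q h) * ∑ y, ψ (y * (2 * a * h)) := by
        rw [sum_comm]; simp_rw [mul_sum]
    _ = Fintype.card F := by
        simp_rw [AddChar.sum_mulShift _ hψ, hdiag]; simp [q]
  exact_mod_cast this

theorem ZMod.natCast_finVal_bijective (d : ℕ) [NeZero d] :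
    Function.Bijective fun m : Fin d => (m.val : ZMod d) := by
  refine (Fintype.bijective_iff_injective_and_card _).2 ⟨fun m m' h => Fin.ext ?_, by simp⟩
  simpa [ZMod.val_cast_of_lt m.isLt, ZMod.val_cast_of_lt m'.isLt] using congrArg ZMod.val h

section WoottersFields

variable {d : ℕ} [NeZero d]

theorem wfVec_apply (k j m : Fin d) :
    wfVec d k j m = ((1 / Real.sqrt d : ℝ) : ℂ) *
      ZMod.stdAddChar (j.val * m.val + k.val * m.val ^ 2 : ZMod d) := by
  have hcast : (j.val * m.val + k.val * m.val ^ 2 : ZMod d) =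
      ((j.val * m.val + k.val * m.val ^ 2 : ℕ) : ZMod d) := by push_cast; ring
  rw [hcast, ZMod.stdAddChar_apply, ZMod.toCircle_natCast]
  rfl

theorem inner_wfVec (k j k' j' : Fin d) :
    inner ℂ (wfVec d k j) (wfVec d k' j') = (d : ℂ)⁻¹ * ∑ x : ZMod d,
      ZMod.stdAddChar ((j'.val - j.val : ZMod d) * x + (k'.val - k.val : ZMod d) * x ^ 2) := by
  have hscale : ((1 / Real.sqrt d : ℝ) : ℂ) * ((1 / Real.sqrt d : ℝ) : ℂ) = (d : ℂ)⁻¹ := by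
    rw [← Complex.ofReal_mul, div_mul_div_comm, one_mul, Real.mul_self_sqrt (Nat.cast_nonneg d)]
    push_cast; ring
  rw [PiLp.inner_apply, mul_sum, ← (ZMod.natCast_finVal_bijective d).sum_comp]
  refine sum_congr rfl fun m _ => ?_
  rw [RCLike.inner_apply, wfVec_apply, wfVec_apply, map_mul, Complex.conj_ofReal,
    ← AddChar.map_neg_eq_conj]
  calc _ = (((1 / Real.sqrt d : ℝ) : ℂ) * ((1 / Real.sqrt d : ℝ) : ℂ)) *
        ZMod.stdAddChar ((j'.val * m.val + k'.val * m.val ^ 2 : ZMod d) +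
          -(j.val * m.val + k.val * m.val ^ 2 : ZMod d)) := by
        rw [mul_mul_mul_comm, ← AddChar.map_add_eq_mul]
    _ = _ := by rw [hscale]; congr 2; ring

theorem norm_sq_inner_stdVec_wfVec (m j k : Fin d) :
    ‖inner ℂ (stdVec d m) (wfVec d k j)‖ ^ 2 = 1 / d := by
  rw [stdVec, EuclideanSpace.inner_single_left, map_one, one_mul, wfVec_apply, norm_mul,
    AddChar.norm_apply, mul_one, Complex.norm_real, Real.norm_of_nonneg (by positivity), div_pow,
    one_pow, Real.sq_sqrt (Nat.cast_nonneg d)]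

theorem orthonormal_wfVec (k : Fin d) : Orthonormal ℂ (wfVec d k) := by
  rw [orthonormal_iff_ite]
  intro j j'
  simp_rw [inner_wfVec, sub_self, zero_mul, add_zero, mul_comm _ (_ : ZMod d)]
  rw [AddChar.sum_mulShift _ (ZMod.isPrimitive_stdAddChar d), ZMod.card]
  simp only [sub_eq_zero, (ZMod.natCast_finVal_bijective d).injective.eq_iff, eq_comm (a := j')]
  split_ifs <;> simp [NeZero.ne]

theorem norm_sq_inner_wfVec_of_ne [Fact d.Prime] (hodd : Odd d) {k k' : Fin d} (hk : k ≠ k')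
    (j j' : Fin d) : ‖inner ℂ (wfVec d k j) (wfVec d k' j')‖ ^ 2 = 1 / d := by
  have h2 : (2 : ZMod d) ≠ 0 := Ring.two_ne_zero <| by
    rw [ZMod.ringChar_zmod_n]; rintro rfl; exact Nat.not_odd_iff_even.2 even_two hodd
  have ha : (k'.val - k.val : ZMod d) ≠ 0 :=
    sub_ne_zero.2 fun h => hk ((ZMod.natCast_finVal_bijective d).injective h).symm
  rw [inner_wfVec, norm_mul, mul_pow,
    AddChar.norm_sq_sum_quadratic (ZMod.isPrimitive_stdAddChar d) h2 ha, ZMod.card, norm_inv,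
    Complex.norm_natCast]
  field_simp

end WoottersFields

theorem stmt_6 (d : ℕ) (hd : d.Prime) (hodd : Odd d) :
    (∀ m j k : Fin d,
        ‖(inner ℂ (stdVec d m) (wfVec d k j) : ℂ)‖ ^ 2 = 1 / d) ∧
    Orthonormal ℂ (stdVec d) ∧
    (∀ k : Fin d, Orthonormal ℂ (wfVec d k)) ∧
    (∀ k k' : Fin d, k ≠ k' → ∀ j j' : Fin d,
        ‖(inner ℂ (wfVec d k j) (wfVec d k' j') : ℂ)‖ ^ 2 = 1 / d) := by
  have : Fact d.Prime := ⟨hd⟩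
  exact ⟨norm_sq_inner_stdVec_wfVec, EuclideanSpace.orthonormal_single, orthonormal_wfVec,
    fun _ _ hk => norm_sq_inner_wfVec_of_ne hodd hk⟩
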